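/- Let X be a real m×n matrix and λ > 0. Then the infimum of ‖Z‖_* + λ‖E‖_{2,1} over all triples (Z, D, E) of real matrices (Z of size n×n, D and E of size m×n) satisfying D = DZ and X = D + E equals the infimum of rank(D) + λ‖E‖_{2,1} over all pairs (D, E) of real m×n matrices satisfying X = D + E; moreover, for any feasible (D, E) of the second problem, the triple (SIM(D), D, E) is feasible for the first problem and achieves objective value rank(D) + λ‖E‖_{2,1}. -/

import Mathlib

open Matrix

/-- The nuclear norm of a real matrix: the sum of its singular values
(the square roots of the eigenvalues of `Aᵀ * A`). -/
noncomputable def nuclearNorm {m n : Type*} [Fintype m] [Fintype n] [DecidableEq n]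
    (A : Matrix m n ℝ) : ℝ :=
  ∑ i, Real.sqrt ((show (Aᵀ * A).IsHermitian by
    simpa [Matrix.conjTranspose_eq_transpose_of_trivial] using
      Matrix.isHermitian_conjTranspose_mul_self A).eigenvalues i)

/-- The shape interaction matrix of a real `m × n` matrix `X`: the `n × n`
orthogonal projection matrix onto the row space of `X`. -/
noncomputable def SIM {m n : ℕ} (X : Matrix (Fin m) (Fin n) ℝ) :
    Matrix (Fin n) (Fin n) ℝ :=
  let U : Submodule ℝ (EuclideanSpace ℝ (Fin n)) :=
    Submodule.span ℝ (Set.range fun i => (WithLp.toLp 2 (X i) : EuclideanSpace ℝ (Fin n)))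
  LinearMap.toMatrix'
    ((WithLp.linearEquiv 2 ℝ (Fin n → ℝ)).toLinearMap ∘ₗ
      ((U.subtypeL.comp U.orthogonalProjectionOnto).toLinearMap :
        EuclideanSpace ℝ (Fin n) →ₗ[ℝ] EuclideanSpace ℝ (Fin n)) ∘ₗ
      (WithLp.linearEquiv 2 ℝ (Fin n → ℝ)).symm.toLinearMap :
      (Fin n → ℝ) →ₗ[ℝ] (Fin n → ℝ))

/-- The `(2,1)`-norm of a real matrix: the sum of the Euclidean norms of its columns. -/
noncomputable def norm21 {m n : Type*} [Fintype m] [Fintype n] (E : Matrix m n ℝ) : ℝ :=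
  ∑ j, Real.sqrt (∑ i, (E i j) ^ 2)

/-!
If `D = D * Z`, then `Zᵀ` fixes the row space `U` of `D` pointwise. Expanding
`rank D = tr P_U` in an orthonormal eigenbasis `(vᵢ)` of `Zᵀ Z`, each term
`⟪vᵢ, P_U vᵢ⟫ = ⟪P_U vᵢ, Z vᵢ⟫` is at most `‖Z vᵢ‖ = σᵢ(Z)`, so `rank D ≤ ‖Z‖_*`.
Conversely `SIM D = P_U` satisfies `D = D * SIM D`, and its singular values are `0` or `1`, so
`‖SIM D‖_* = tr P_U = rank D`. Thus every value of the first problem dominates a value of the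
second, and every value of the second is a value of the first.
-/

open WithLp (toLp ofLp)
open Module (finrank)

namespace Submodule

variable {𝕜 E : Type*} [RCLike 𝕜] [NormedAddCommGroup E] [InnerProductSpace 𝕜 E]

theorem trace_starProjection [FiniteDimensional 𝕜 E] (K : Submodule 𝕜 E) :
    LinearMap.trace 𝕜 E K.starProjection = finrank 𝕜 K :=
  LinearMap.IsProj.trace ⟨K.starProjection_apply_mem, fun _ => K.starProjection_eq_self_iff.2⟩

theorem inner_starProjection_le_norm_mul_norm {F : Type*} [NormedAddCommGroup F]
    [InnerProductSpace ℝ F] (K : Submodule ℝ F) [K.HasOrthogonalProjection] {T : F → F}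
    (hT : ∀ x ∈ K, ∀ y, inner ℝ x (T y) = inner ℝ x y) (v : F) :
    inner ℝ v (K.starProjection v) ≤ ‖v‖ * ‖T v‖ :=
  calc inner ℝ v (K.starProjection v) = inner ℝ (K.starProjection v) (T v) := by
        rw [real_inner_comm, hT _ (K.starProjection_apply_mem v)]
    _ ≤ ‖K.starProjection v‖ * ‖T v‖ := real_inner_le_norm _ _
    _ ≤ ‖v‖ * ‖T v‖ := by gcongr; exact K.norm_starProjection_apply_le v

end Submodule

namespace Matrix

variable {m n : Type*}

def rowSpace (D : Matrix m n ℝ) : Submodule ℝ (EuclideanSpace ℝ n) :=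
  Submodule.span ℝ (Set.range fun i => toLp 2 (D i))

theorem rank_eq_finrank_rowSpace [Finite m] [Fintype n] (D : Matrix m n ℝ) :
    D.rank = finrank ℝ D.rowSpace := by
  rw [D.rank_eq_finrank_span_row, rowSpace,
    ← LinearEquiv.finrank_map_eq (WithLp.linearEquiv 2 ℝ (n → ℝ)).symm,
    Submodule.map_span, ← Set.range_comp]
  rfl

theorem vecMul_eq_self_of_mem_rowSpace [Fintype n] {D : Matrix m n ℝ} {Z : Matrix n n ℝ}
    (h : D * Z = D) {x : EuclideanSpace ℝ n} (hx : x ∈ D.rowSpace) : ofLp x ᵥ* Z = ofLp x := by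
  induction hx using Submodule.span_induction with
  | mem _ hy => obtain ⟨i, rfl⟩ := hy; exact congrFun h i
  | zero => exact zero_vecMul Z
  | add _ _ _ _ hy hz => rw [WithLp.ofLp_add, add_vecMul, hy, hz]
  | smul _ _ _ hy => rw [WithLp.ofLp_smul, smul_vecMul, hy]

variable [Fintype m]

theorem isHermitian_transpose_mul_self (A : Matrix m n ℝ) : (Aᵀ * A).IsHermitian := by
  simpa [conjTranspose_eq_transpose_of_trivial] using isHermitian_conjTranspose_mul_self A

variable [Fintype n] [DecidableEq n]

theorem norm_mulVec_eigenvectorBasis (A : Matrix m n ℝ) (i : n) :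
    ‖toLp 2 (A *ᵥ (isHermitian_transpose_mul_self A).eigenvectorBasis i)‖ =
      √((isHermitian_transpose_mul_self A).eigenvalues i) := by
  have hμ : (isHermitian_transpose_mul_self A).eigenvalues i =
      ‖toLp 2 (A *ᵥ (isHermitian_transpose_mul_self A).eigenvectorBasis i)‖ ^ 2 := by
    rw [(isHermitian_transpose_mul_self A).eigenvalues_eq i, ← real_inner_self_eq_norm_sq,
      EuclideanSpace.inner_eq_star_dotProduct, ← mulVec_mulVec, dotProduct_mulVec,
      vecMul_transpose]
    simp only [star_trivial, RCLike.re_to_real]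
  rw [hμ, Real.sqrt_sq (norm_nonneg _)]

theorem finrank_le_nuclearNorm (Z : Matrix n n ℝ) (K : Submodule ℝ (EuclideanSpace ℝ n))
    (hK : ∀ x ∈ K, ofLp x ᵥ* Z = ofLp x) : (finrank ℝ K : ℝ) ≤ nuclearNorm Z := by
  set b := (isHermitian_transpose_mul_self Z).eigenvectorBasis
  have hT : ∀ x ∈ K, ∀ y, inner ℝ x (toLpLin 2 2 Z y) = inner ℝ x y := by
    intro x hx y
    simp only [EuclideanSpace.inner_eq_star_dotProduct, toLpLin_apply, star_trivial]
    rw [dotProduct_comm, dotProduct_mulVec, hK x hx, dotProduct_comm]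
  calc (finrank ℝ K : ℝ) = ∑ i, inner ℝ (b i) (K.starProjection (b i)) := by
        rw [← K.trace_starProjection, LinearMap.trace_eq_sum_inner _ b]
        rfl
    _ ≤ ∑ i, √((isHermitian_transpose_mul_self Z).eigenvalues i) := by
        gcongr with i
        refine (K.inner_starProjection_le_norm_mul_norm hT (b i)).trans_eq ?_
        rw [b.orthonormal.1 i, one_mul, toLpLin_apply, norm_mulVec_eigenvectorBasis]
    _ = nuclearNorm Z := rfl

theorem rank_le_nuclearNorm_of_mul_eq {D : Matrix m n ℝ} {Z : Matrix n n ℝ} (h : D * Z = D) :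
    (D.rank : ℝ) ≤ nuclearNorm Z := by
  rw [rank_eq_finrank_rowSpace]
  exact finrank_le_nuclearNorm Z _ fun _ => vecMul_eq_self_of_mem_rowSpace h

theorem IsHermitian.sum_sqrt_eigenvalues_eq_trace {P : Matrix n n ℝ} (hP : P.IsHermitian)
    (hidem : IsIdempotentElem P) : ∑ i, √(hP.eigenvalues i) = P.trace := by
  have hsqrt : ∀ i, √(hP.eigenvalues i) = hP.eigenvalues i := fun i => by
    obtain h | h : hP.eigenvalues i = 0 ∨ hP.eigenvalues i = 1 :=
      hidem.spectrum_subset ℝ (hP.eigenvalues_mem_spectrum_real i)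
    all_goals rw [h]; simp
  simp only [hsqrt, hP.trace_eq_sum_eigenvalues, RCLike.ofReal_real_eq_id, id]

theorem nuclearNorm_eq_trace {P : Matrix n n ℝ} (hP : P.IsHermitian) (hidem : IsIdempotentElem P) :
    nuclearNorm P = P.trace := by
  have hPtP : Pᵀ * P = P := by
    rw [← conjTranspose_eq_transpose_of_trivial, hP.eq, hidem.eq]
  calc nuclearNorm P = (Pᵀ * P).trace :=
        (isHermitian_transpose_mul_self P).sum_sqrt_eigenvalues_eq_trace (by rwa [hPtP])
    _ = P.trace := by rw [hPtP]

end Matrix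

section ShapeInteraction

variable {m n : ℕ} (D : Matrix (Fin m) (Fin n) ℝ)

theorem toLpLin_SIM : toLpLin 2 2 (SIM D) = (D.rowSpace.starProjection : _ →ₗ[ℝ] _) := by
  ext x
  simp [SIM, rowSpace, toLpLin_apply]

theorem isHermitian_SIM : (SIM D).IsHermitian := by
  rw [← isSymmetric_toEuclideanLin_iff, toLpLin_SIM]
  exact D.rowSpace.starProjection_isSymmetric

theorem isIdempotentElem_SIM : IsIdempotentElem (SIM D) :=
  (toLpLin 2 2).injective <| by
    rw [toLpLin_mul_same, toLpLin_SIM]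
    exact congrArg ContinuousLinearMap.toLinearMap D.rowSpace.isIdempotentElem_starProjection

theorem trace_SIM : (SIM D).trace = D.rank := by
  rw [← trace_toLin_eq (SIM D) (PiLp.basisFun 2 ℝ (Fin n)), ← toLpLin_eq_toLin, toLpLin_SIM,
    Submodule.trace_starProjection, rank_eq_finrank_rowSpace]

theorem nuclearNorm_SIM : nuclearNorm (SIM D) = D.rank := by
  rw [nuclearNorm_eq_trace (isHermitian_SIM D) (isIdempotentElem_SIM D), trace_SIM]

theorem mul_SIM : D * SIM D = D := by
  funext i
  have hrow : toLp 2 (D i) ∈ D.rowSpace := Submodule.subset_span ⟨i, rfl⟩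
  calc (D * SIM D) i = SIM D *ᵥ D i := by
        rw [mul_apply_eq_vecMul, ← mulVec_transpose, ← conjTranspose_eq_transpose_of_trivial,
          (isHermitian_SIM D).eq]
    _ = ofLp (D.rowSpace.starProjection (toLp 2 (D i))) :=
        congrArg ofLp (LinearMap.congr_fun (toLpLin_SIM D) (toLp 2 (D i)))
    _ = D i := by rw [D.rowSpace.starProjection_eq_self_iff.2 hrow]

end ShapeInteraction

theorem lrr_clean_dictionary_equiv_csrpca_general {m n : ℕ} (X : Matrix (Fin m) (Fin n) ℝ)
    (lam : ℝ) :
    sInf {v : ℝ | ∃ (Z : Matrix (Fin n) (Fin n) ℝ) (D E : Matrix (Fin m) (Fin n) ℝ),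
        D = D * Z ∧ X = D + E ∧ v = nuclearNorm Z + lam * norm21 E}
      = sInf {v : ℝ | ∃ D E : Matrix (Fin m) (Fin n) ℝ,
        X = D + E ∧ v = (D.rank : ℝ) + lam * norm21 E} ∧
    ∀ D E : Matrix (Fin m) (Fin n) ℝ, X = D + E →
      D = D * SIM D ∧
      nuclearNorm (SIM D) + lam * norm21 E = (D.rank : ℝ) + lam * norm21 E := by
  refine ⟨csInf_eq_csInf_of_forall_exists_le ?_ ?_,
    fun D E _ => ⟨(mul_SIM D).symm, by rw [nuclearNorm_SIM]⟩⟩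
  · rintro _ ⟨Z, D, E, hDZ, hX, rfl⟩
    exact ⟨_, ⟨D, E, hX, rfl⟩, by gcongr; exact rank_le_nuclearNorm_of_mul_eq hDZ.symm⟩
  · rintro _ ⟨D, E, hX, rfl⟩
    exact ⟨_, ⟨SIM D, D, E, (mul_SIM D).symm, hX, rfl⟩, by rw [nuclearNorm_SIM]⟩

/-- For a real `m × n` matrix `X` and `λ > 0`, the infimum of `‖Z‖₊ + λ * ‖E‖₂,₁` over
all triples `(Z, D, E)` with `D = D * Z` and `X = D + E` equals the infimum of
`rank D + λ * ‖E‖₂,₁` over all pairs `(D, E)` with `X = D + E`; moreover, for any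
feasible `(D, E)` of the second problem, the triple `(SIM D, D, E)` is feasible for
the first and achieves the objective value `rank D + λ * ‖E‖₂,₁`. -/
theorem lrr_clean_dictionary_equiv_csrpca {m n : ℕ} (X : Matrix (Fin m) (Fin n) ℝ)
    (lam : ℝ) (hlam : 0 < lam) :
    sInf {v : ℝ | ∃ (Z : Matrix (Fin n) (Fin n) ℝ) (D E : Matrix (Fin m) (Fin n) ℝ),
        D = D * Z ∧ X = D + E ∧ v = nuclearNorm Z + lam * norm21 E}
      = sInf {v : ℝ | ∃ D E : Matrix (Fin m) (Fin n) ℝ,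
        X = D + E ∧ v = (D.rank : ℝ) + lam * norm21 E} ∧
    ∀ D E : Matrix (Fin m) (Fin n) ℝ, X = D + E →
      D = D * SIM D ∧
      nuclearNorm (SIM D) + lam * norm21 E = (D.rank : ℝ) + lam * norm21 E :=
  lrr_clean_dictionary_equiv_csrpca_general X lam
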